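/- arXiv:2012.06798 — 3 statements merged into one kernel-verified Lean document; each statement's English description precedes it below -/
import Mathlib

section
/- Let f : (R,m) → (S,n) be a finite injective local homomorphism of commutative noetherian local rings. Then every finitely generated S-module that is pseudo-zero as an S-module is pseudo-zero as an R-module (via restriction of scalars), so the canonical map G(S) → G(R) induces a homomorphism g : H(S) → H(R); moreover the induced map g_Q : H(S)⊗Q → H(R)⊗Q is surjective. -/
universe u

/-- A bundled finitely generated module over `R`. -/
structure FGMod (R : Type u) [CommRing R] : Type (u + 1) where
  carrier : Type u
  [isAddCommGroup : AddCommGroup carrier]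
  [isModule : Module R carrier]
  [isFG : Module.Finite R carrier]

attribute [instance] FGMod.isAddCommGroup FGMod.isModule FGMod.isFG

variable (R : Type u) [CommRing R]

/-- The bundled module `R` over itself. -/
def FGMod.self : FGMod R := { carrier := R }

/-- Relations defining the Grothendieck group of finitely generated modules:
for every short exact sequence `0 → A → B → C → 0`, `[B] = [A] + [C]`. -/
def grothendieckRelations : AddSubgroup (FreeAbelianGroup (FGMod R)) :=
  AddSubgroup.closure
    { x | ∃ (A B C : FGMod R) (f : A.carrier →ₗ[R] B.carrier)
        (g : B.carrier →ₗ[R] C.carrier),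
        Function.Injective f ∧ Function.Surjective g ∧
        LinearMap.range f = LinearMap.ker g ∧
        x = FreeAbelianGroup.of B - FreeAbelianGroup.of A - FreeAbelianGroup.of C }

/-- The Grothendieck group `G(R)` of finitely generated `R`-modules. -/
def GGroup : Type (u + 1) := FreeAbelianGroup (FGMod R) ⧸ grothendieckRelations R

instance : AddCommGroup (GGroup R) := QuotientAddGroup.Quotient.addCommGroup _

/-- The class of a module in `G(R)`. -/
def gcls (M : FGMod R) : GGroup R := QuotientAddGroup.mk (FreeAbelianGroup.of M)

/-- A module is pseudo-zero if it vanishes at all primes of height at most one. -/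
def IsPseudoZero (M : Type u) [AddCommGroup M] [Module R M] : Prop :=
  ∀ (p : Ideal R) (hp : p.IsPrime),
    Order.height (⟨p, hp⟩ : PrimeSpectrum R) ≤ 1 →
      Subsingleton (LocalizedModule p.primeCompl M)

/-- The subgroup of `G(R)` generated by classes of pseudo-zero modules. -/
def pseudoZeroSubgroup : AddSubgroup (GGroup R) :=
  AddSubgroup.closure { x | ∃ M : FGMod R, IsPseudoZero R M.carrier ∧ x = gcls R M }

/-- `H(R)`: the Grothendieck group modulo pseudo-zero modules. -/
def HGroup : Type (u + 1) := GGroup R ⧸ pseudoZeroSubgroup R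

instance : AddCommGroup (HGroup R) := QuotientAddGroup.Quotient.addCommGroup _

/-- The class of a module in `H(R)`. -/
def hcls (M : FGMod R) : HGroup R := QuotientAddGroup.mk (gcls R M)

/-! ### Auxiliary definitions and lemmas -/

section Aux

variable (A : Type u) [CommRing A]

/-- A bundled f.g. module from a type with instances. -/
@[reducible] def FGModOf (X : Type u) [AddCommGroup X] [Module A X] [Module.Finite A X] : FGMod A :=
  { carrier := X }

/-- The quotient of the ring by an ideal, as a bundled f.g. module. -/
@[reducible] def FGModQuot (I : Ideal A) : FGMod A := FGModOf A (A ⧸ I)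

/-- The canonical map to `G(A)` as a group hom. -/
def gmk : FreeAbelianGroup (FGMod A) →+ GGroup A :=
  QuotientAddGroup.mk' (grothendieckRelations A)

/-- The canonical map to `H(A)` as a group hom. -/
def hmk : GGroup A →+ HGroup A :=
  QuotientAddGroup.mk' (pseudoZeroSubgroup A)

lemma gcls_eq_gmk (M : FGMod A) : gcls A M = gmk A (FreeAbelianGroup.of M) := rfl

lemma hcls_eq_hmk (M : FGMod A) : hcls A M = hmk A (gcls A M) := rfl

/-- Additivity of classes in `G(A)` along short exact sequences. -/
lemma gcls_add_of_ses (A' B C : FGMod A) (φ : A'.carrier →ₗ[A] B.carrier)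
    (ψ : B.carrier →ₗ[A] C.carrier) (hφ : Function.Injective φ)
    (hψ : Function.Surjective ψ) (hr : LinearMap.range φ = LinearMap.ker ψ) :
    gcls A B = gcls A A' + gcls A C := by
  have hmem : FreeAbelianGroup.of B - FreeAbelianGroup.of A' - FreeAbelianGroup.of C ∈
      grothendieckRelations A :=
    AddSubgroup.subset_closure ⟨A', B, C, φ, ψ, hφ, hψ, hr, rfl⟩
  have h0 : gmk A (FreeAbelianGroup.of B - FreeAbelianGroup.of A' - FreeAbelianGroup.of C) = 0 :=
    (QuotientAddGroup.eq_zero_iff _).mpr hmem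
  rw [map_sub, map_sub] at h0
  rw [gcls_eq_gmk, gcls_eq_gmk, gcls_eq_gmk]
  exact sub_eq_zero.mp ((sub_sub _ _ _).symm.trans h0)

lemma hcls_add_of_ses (A' B C : FGMod A) (φ : A'.carrier →ₗ[A] B.carrier)
    (ψ : B.carrier →ₗ[A] C.carrier) (hφ : Function.Injective φ)
    (hψ : Function.Surjective ψ) (hr : LinearMap.range φ = LinearMap.ker ψ) :
    hcls A B = hcls A A' + hcls A C := by
  rw [hcls_eq_hmk, hcls_eq_hmk, hcls_eq_hmk, gcls_add_of_ses A A' B C φ ψ hφ hψ hr, map_add]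

lemma gcls_zero_of_subsingleton (B : FGMod A) (h : Subsingleton B.carrier) :
    gcls A B = 0 := by
  haveI := h
  have h1 : LinearMap.range (LinearMap.id : B.carrier →ₗ[A] B.carrier)
      = LinearMap.ker (LinearMap.id : B.carrier →ₗ[A] B.carrier) :=
    Subsingleton.elim _ _
  have := gcls_add_of_ses A B B B LinearMap.id LinearMap.id
    (fun _ _ h => h) (fun x => ⟨x, rfl⟩) h1
  rwa [left_eq_add] at this

lemma hcls_zero_of_subsingleton (B : FGMod A) (h : Subsingleton B.carrier) :
    hcls A B = 0 := by
  rw [hcls_eq_hmk, gcls_zero_of_subsingleton A B h, map_zero]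

lemma gcls_congr (B C : FGMod A) (e : B.carrier ≃ₗ[A] C.carrier) :
    gcls A B = gcls A C := by
  haveI : Module.Finite A PUnit.{u+1} :=
    Module.Finite.of_surjective (0 : A →ₗ[A] PUnit.{u+1}) (fun x => ⟨0, Subsingleton.elim _ _⟩)
  have hr : LinearMap.range e.toLinearMap = LinearMap.ker (0 : C.carrier →ₗ[A] PUnit.{u+1}) := by
    have h1 : LinearMap.range e.toLinearMap = ⊤ := LinearMap.range_eq_top.mpr e.surjective
    rw [h1, LinearMap.ker_zero]
  have := gcls_add_of_ses A B C (FGModOf A PUnit.{u+1}) e.toLinearMap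
    (0 : C.carrier →ₗ[A] PUnit.{u+1}) e.injective (fun x => ⟨0, Subsingleton.elim _ _⟩) hr
  rw [gcls_zero_of_subsingleton A (FGModOf A PUnit.{u+1})
    (inferInstanceAs (Subsingleton PUnit.{u+1})), add_zero] at this
  exact this.symm

lemma hcls_congr (B C : FGMod A) (e : B.carrier ≃ₗ[A] C.carrier) :
    hcls A B = hcls A C := by
  rw [hcls_eq_hmk, hcls_eq_hmk, gcls_congr A B C e]

lemma hcls_zero_of_pz (B : FGMod A) (h : IsPseudoZero A B.carrier) : hcls A B = 0 :=
  (QuotientAddGroup.eq_zero_iff _).mpr (AddSubgroup.subset_closure ⟨B, h, rfl⟩)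

/-- Dévissage: the class of a module is, modulo `T`, a multiple of the class of `A ⧸ p₀`,
provided all other relevant prime cyclic classes lie in `T`. -/
lemma devissage [IsNoetherianRing A] (T : AddSubgroup (HGroup A)) (p₀ : Ideal A)
    (N : FGMod A)
    (hT : ∀ q : Ideal A, q.IsPrime →
      (∀ r : A, (∀ m : N.carrier, r • m = 0) → r ∈ q) → q ≠ p₀ →
      hcls A (FGModQuot A q) ∈ T) :
    ∃ k : ℕ, hcls A N - k • hcls A (FGModQuot A p₀) ∈ T := by
  have main : ∀ W : Submodule A N.carrier,
      (∀ W' : Submodule A N.carrier, W < W' →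
        (∃ k : ℕ, hcls A (FGModOf A (N.carrier ⧸ W')) - k • hcls A (FGModQuot A p₀) ∈ T)) →
      ∃ k : ℕ, hcls A (FGModOf A (N.carrier ⧸ W)) - k • hcls A (FGModQuot A p₀) ∈ T := by
    intro W IH
    by_cases hW : W = ⊤
    · refine ⟨0, ?_⟩
      rw [hcls_zero_of_subsingleton A _
        (Submodule.Quotient.subsingleton_iff.mpr hW)]
      simpa using zero_mem T
    · haveI : Nontrivial (N.carrier ⧸ W) :=
        Submodule.Quotient.nontrivial_iff.mpr hW
      obtain ⟨q, hq⟩ := associatedPrimes.nonempty A (N.carrier ⧸ W)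
      obtain ⟨hqp, x, hxq⟩ := isAssociatedPrime_iff.mp hq
      have hx0 : x ≠ 0 := by
        rintro rfl
        apply hqp.ne_top
        rw [hxq, eq_top_iff]
        intro r _
        exact Submodule.mem_colon_singleton.mpr (by rw [smul_zero]; exact Submodule.zero_mem _)
      set W' : Submodule A N.carrier :=
        Submodule.comap W.mkQ (Submodule.span A {x}) with hW'def
      have hWW' : W < W' := by
        rw [SetLike.lt_iff_le_and_exists]
        constructor
        · intro y hy
          rw [hW'def, Submodule.mem_comap, Submodule.mkQ_apply,
            (Submodule.Quotient.mk_eq_zero W).mpr hy]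
          exact zero_mem _
        · obtain ⟨y, hy⟩ := Submodule.Quotient.mk_surjective W x
          refine ⟨y, ?_, fun hyW => hx0 ?_⟩
          · rw [hW'def, Submodule.mem_comap, Submodule.mkQ_apply, hy]
            exact Submodule.mem_span_singleton_self x
          · rw [← hy]
            exact (Submodule.Quotient.mk_eq_zero W).mpr hyW
      set U : Submodule A (N.carrier ⧸ W) := Submodule.map W.mkQ W' with hUdef
      have hUspan : U = Submodule.span A {x} := by
        rw [hUdef, hW'def, Submodule.map_comap_eq, Submodule.range_mkQ, top_inf_eq]
      have hkerts : LinearMap.ker (LinearMap.toSpanSingleton A (N.carrier ⧸ W) x) = q := by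
        ext r
        rw [LinearMap.mem_ker, LinearMap.toSpanSingleton_apply, hxq,
          Submodule.mem_colon_singleton, Submodule.mem_bot]
      set φ : (A ⧸ q) →ₗ[A] (N.carrier ⧸ W) :=
        Submodule.liftQ q (LinearMap.toSpanSingleton A (N.carrier ⧸ W) x)
          (le_of_eq hkerts.symm) with hφdef
      have hφinj : Function.Injective φ := by
        rw [← LinearMap.ker_eq_bot]
        exact Submodule.ker_liftQ_eq_bot _ _ _ (le_of_eq hkerts)
      have hφrange : LinearMap.range φ = U := by
        rw [hφdef, Submodule.range_liftQ, hUspan, LinearMap.span_singleton_eq_range]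
      have relation := hcls_add_of_ses A (FGModQuot A q) (FGModOf A (N.carrier ⧸ W))
        (FGModOf A ((N.carrier ⧸ W) ⧸ U)) φ U.mkQ hφinj (Submodule.mkQ_surjective U)
        (by rw [hφrange, Submodule.ker_mkQ])
      have hiso := hcls_congr A (FGModOf A ((N.carrier ⧸ W) ⧸ U))
        (FGModOf A (N.carrier ⧸ W'))
        (Submodule.quotientQuotientEquivQuotient W W' hWW'.le)
      obtain ⟨k', hk'⟩ := IH W' hWW'
      by_cases hqp₀ : q = p₀
      · refine ⟨k' + 1, ?_⟩
        have heq : hcls A (FGModOf A (N.carrier ⧸ W)) - (k' + 1) • hcls A (FGModQuot A p₀)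
            = hcls A (FGModOf A (N.carrier ⧸ W')) - k' • hcls A (FGModQuot A p₀) := by
          rw [relation, hiso, hqp₀, succ_nsmul]
          abel
        rw [heq]
        exact hk'
      · have hqT : hcls A (FGModQuot A q) ∈ T := by
          refine hT q hqp ?_ hqp₀
          intro r hr
          rw [hxq, Submodule.mem_colon_singleton, Submodule.mem_bot]
          obtain ⟨y, hy⟩ := Submodule.Quotient.mk_surjective W x
          rw [← hy, ← Submodule.Quotient.mk_smul, hr y]
          exact Submodule.Quotient.mk_zero W
        refine ⟨k', ?_⟩
        have heq : hcls A (FGModOf A (N.carrier ⧸ W)) - k' • hcls A (FGModQuot A p₀)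
            = hcls A (FGModQuot A q)
              + (hcls A (FGModOf A (N.carrier ⧸ W')) - k' • hcls A (FGModQuot A p₀)) := by
          rw [relation, hiso]
          abel
        rw [heq]
        exact add_mem hqT hk'
  have wf : WellFounded ((· > ·) : Submodule A N.carrier → Submodule A N.carrier → Prop) :=
    IsWellFounded.wf
  have all : ∀ W : Submodule A N.carrier,
      ∃ k : ℕ, hcls A (FGModOf A (N.carrier ⧸ W)) - k • hcls A (FGModQuot A p₀) ∈ T :=
    fun W => wf.induction W (fun W IH => main W (fun W' h => IH W' h))
  obtain ⟨k, hk⟩ := all ⊥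
  refine ⟨k, ?_⟩
  rwa [hcls_congr A (FGModOf A (N.carrier ⧸ (⊥ : Submodule A N.carrier))) N
    (Submodule.quotEquivOfEqBot ⊥ rfl)] at hk

end Aux

/-- Restriction of scalars along a finite ring hom, on bundled modules. -/
@[reducible] def resMod {R S : Type u} [CommRing R] [CommRing S] (f : R →+* S)
    (hfin : f.Finite) (M : FGMod S) : FGMod R :=
  letI : Algebra R S := f.toAlgebra
  haveI : Module.Finite R S := hfin
  letI : Module R M.carrier := Module.compHom M.carrier f
  haveI : IsScalarTower R S M.carrier :=
    ⟨fun r s m => (mul_smul (f r) s m : (f r * s) • m = f r • s • m)⟩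
  haveI : Module.Finite R M.carrier := Module.Finite.trans S M.carrier
  { carrier := M.carrier }


/-- For a finite injective local homomorphism `f : R → S` of noetherian
local rings, pseudo-zero `S`-modules restrict to pseudo-zero `R`-modules, the canonical
map `G(S) → G(R)` induces `g : H(S) → H(R)`, and `g ⊗ ℚ` is surjective. -/
theorem pseudoZero_restrict_and_induced_hom_of_finite_local
    (R S : Type u) [CommRing R] [IsNoetherianRing R] [IsLocalRing R]
    [CommRing S] [IsNoetherianRing S] [IsLocalRing S]
    (f : R →+* S) (hfin : f.Finite) (hinj : Function.Injective f)
    (hloc : IsLocalHom f) :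
    (∀ (M : Type u) [AddCommGroup M] [Module S M],
        ∀ (_ : Module.Finite S M), IsPseudoZero S M →
        ∀ (N : Type u) [AddCommGroup N] [Module R N] (e : N ≃+ M),
          (∀ (r : R) (x : N), e (r • x) = f r • e x) →
          IsPseudoZero R N) ∧
    ∃ g : HGroup S →+ HGroup R,
      (∀ (M : FGMod S) (N : FGMod R) (e : N.carrier ≃+ M.carrier),
        (∀ (r : R) (x : N.carrier), e (r • x) = f r • e x) →
        g (hcls S M) = hcls R N) ∧
      Function.Surjective (LinearMap.lTensor ℚ g.toIntLinearMap) := by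
  classical
  letI : Algebra R S := f.toAlgebra
  haveI : Module.Finite R S := hfin
  haveI : Algebra.IsIntegral R S := Algebra.IsIntegral.of_finite R S
  have halg : algebraMap R S = f := RingHom.algebraMap_toAlgebra f
  -- comap as a strictly monotone map of prime spectra
  have hsm : StrictMono (fun Q : PrimeSpectrum S =>
      (⟨Q.asIdeal.comap f, Q.isPrime.comap f⟩ : PrimeSpectrum R)) := by
    intro Q1 Q2 h
    have hlt : Q1.asIdeal < Q2.asIdeal := h
    obtain ⟨x, hx2, hx1⟩ := SetLike.exists_of_lt hlt
    have := Ideal.comap_lt_comap_of_integral_mem_sdiff (I := Q1.asIdeal) (J := Q2.asIdeal)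
      hlt.le ⟨hx2, hx1⟩ (Algebra.IsIntegral.isIntegral (R := R) x)
    rw [halg] at this
    exact this
  -- the core pseudo-zero transfer statement
  have core : ∀ (M : Type u) [AddCommGroup M] [Module S M], IsPseudoZero S M →
      ∀ (p : Ideal R) (hp : p.IsPrime),
        Order.height (⟨p, hp⟩ : PrimeSpectrum R) ≤ 1 →
        ∀ x : M, ∃ s ∈ p.primeCompl, f s • x = 0 := by
    intro M _ _ hpz p hp hht x
    by_contra hcon
    push_neg at hcon
    set J : Ideal S := LinearMap.ker (LinearMap.toSpanSingleton S M x) with hJ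
    have hdisj : Disjoint (J : Set S)
        ((Submonoid.map f.toMonoidHom p.primeCompl : Submonoid S) : Set S) := by
      rw [Set.disjoint_left]
      rintro a haJ ⟨s, hs, rfl⟩
      refine hcon s hs ?_
      simpa [hJ, LinearMap.mem_ker, LinearMap.toSpanSingleton_apply] using haJ
    obtain ⟨q, hq, hJq, hqd⟩ := Ideal.exists_le_prime_disjoint J _ hdisj
    have hcomap : q.comap f ≤ p := by
      intro r hr
      by_contra hrp
      exact Set.disjoint_left.mp hqd hr ⟨r, hrp, rfl⟩
    have hht_q : Order.height (⟨q, hq⟩ : PrimeSpectrum S) ≤ 1 := by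
      haveI := hq
      have h1 : Order.height (⟨q, hq⟩ : PrimeSpectrum S)
          ≤ Order.height (⟨q.comap f, hq.comap f⟩ : PrimeSpectrum R) :=
        Order.height_le_height_apply_of_strictMono _ hsm ⟨q, hq⟩
      have h2 : Order.height (⟨q.comap f, hq.comap f⟩ : PrimeSpectrum R)
          ≤ Order.height (⟨p, hp⟩ : PrimeSpectrum R) :=
        Order.height_mono (hcomap : (⟨q.comap f, hq.comap f⟩ : PrimeSpectrum R) ≤ ⟨p, hp⟩)
      exact le_trans h1 (le_trans h2 hht)
    have hsub := hpz q hq hht_q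
    rw [LocalizedModule.subsingleton_iff] at hsub
    obtain ⟨s, hsq, hsx⟩ := hsub x
    exact hsq (hJq (by
      simpa [hJ, LinearMap.mem_ker, LinearMap.toSpanSingleton_apply] using hsx))
  refine ⟨?_, ?_⟩
  · intro M _ _ _ hpz N _ _ e he p hp hht
    rw [LocalizedModule.subsingleton_iff]
    intro n
    obtain ⟨s, hs, hsx⟩ := core M hpz p hp hht (e n)
    refine ⟨s, hs, e.injective ?_⟩
    rw [he, hsx, map_zero]
  · -- the induced homomorphism
    have pzres : ∀ M : FGMod S, IsPseudoZero S M.carrier →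
        IsPseudoZero R (resMod f hfin M).carrier := by
      intro M hM p hp hht
      rw [LocalizedModule.subsingleton_iff]
      intro m
      obtain ⟨s, hs, h0⟩ := core M.carrier hM p hp hht m
      exact ⟨s, hs, h0⟩
    set Φ0 : FreeAbelianGroup (FGMod S) →+ HGroup R :=
      FreeAbelianGroup.lift (fun M => hcls R (resMod f hfin M)) with hΦ0def
    have hΦ0_of : ∀ M : FGMod S, Φ0 (FreeAbelianGroup.of M) = hcls R (resMod f hfin M) :=
      fun M => FreeAbelianGroup.lift_apply_of _ _
    have hker1 : grothendieckRelations S ≤ Φ0.ker := by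
      rw [grothendieckRelations, AddSubgroup.closure_le]
      rintro x ⟨A', B, C, φ, ψ, hφ, hψ, hr, rfl⟩
      have hx : Φ0 (FreeAbelianGroup.of B - FreeAbelianGroup.of A' - FreeAbelianGroup.of C)
          = hcls R (resMod f hfin B) - hcls R (resMod f hfin A') - hcls R (resMod f hfin C) := by
        rw [map_sub, map_sub, hΦ0_of, hΦ0_of, hΦ0_of]
      rw [SetLike.mem_coe, AddMonoidHom.mem_ker, hx]
      set φ' : (resMod f hfin A').carrier →ₗ[R] (resMod f hfin B).carrier :=
        { toFun := φ, map_add' := φ.map_add,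
          map_smul' := fun r m => φ.map_smul (f r) m } with hφ'def
      set ψ' : (resMod f hfin B).carrier →ₗ[R] (resMod f hfin C).carrier :=
        { toFun := ψ, map_add' := ψ.map_add,
          map_smul' := fun r m => ψ.map_smul (f r) m } with hψ'def
      have hr' : LinearMap.range φ' = LinearMap.ker ψ' := by
        ext m
        rw [LinearMap.mem_range, LinearMap.mem_ker]
        have := SetLike.ext_iff.mp hr m
        rw [LinearMap.mem_range, LinearMap.mem_ker] at this
        exact this
      have relR := hcls_add_of_ses R (resMod f hfin A') (resMod f hfin B)
        (resMod f hfin C) φ' ψ' hφ hψ hr'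
      rw [relR]
      abel
    set Φ1 : GGroup S →+ HGroup R :=
      QuotientAddGroup.lift (grothendieckRelations S) Φ0 hker1 with hΦ1def
    have hΦ1 : ∀ a : FreeAbelianGroup (FGMod S),
        Φ1 (gmk S a) = Φ0 a := fun a => rfl
    have hker2 : ∀ x ∈ pseudoZeroSubgroup S, Φ1 x = 0 := by
      intro x hx
      refine AddSubgroup.closure_induction ?_ ?_ ?_ ?_ hx
      · rintro y ⟨M, hM, rfl⟩
        have h1 : Φ1 (gcls S M) = hcls R (resMod f hfin M) := by
          rw [gcls_eq_gmk, hΦ1, hΦ0_of]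
        rw [h1]
        exact hcls_zero_of_pz R _ (pzres M hM)
      · exact map_zero Φ1
      · intro y z _ _ hy hz
        rw [map_add, hy, hz, add_zero]
      · intro y _ hy
        rw [map_neg, hy, neg_zero]
    set ψH : HGroup S →+ HGroup R :=
      QuotientAddGroup.lift (pseudoZeroSubgroup S) Φ1 (fun x hx => hker2 x hx) with hψHdef
    have hψ_hcls : ∀ M : FGMod S, ψH (hcls S M) = hcls R (resMod f hfin M) := by
      intro M
      have h1 : ψH (hcls S M) = Φ1 (gcls S M) := rfl
      rw [h1, gcls_eq_gmk, hΦ1, hΦ0_of]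
    refine ⟨ψH, ?_, ?_⟩
    · intro M N e he
      rw [hψ_hcls M]
      have e' : N.carrier ≃ₗ[R] (resMod f hfin M).carrier :=
        { toFun := e, invFun := e.symm, left_inv := e.left_inv, right_inv := e.right_inv,
          map_add' := e.map_add, map_smul' := fun r m => he r m }
      exact (hcls_congr R N (resMod f hfin M) e').symm
    · -- surjectivity of the rationalized map
      set T : AddSubgroup (HGroup R) :=
        { carrier := {h | ∃ n : ℕ, 0 < n ∧ ∃ z : HGroup S, ψH z = n • h}
          zero_mem' := ⟨1, one_pos, 0, by simp⟩
          add_mem' := by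
            rintro a b ⟨n, hn, z, hz⟩ ⟨m, hm, w, hw⟩
            refine ⟨n * m, Nat.mul_pos hn hm, m • z + n • w, ?_⟩
            rw [map_add, map_nsmul, map_nsmul, hz, hw, smul_smul, smul_smul,
              smul_add, mul_comm m n]
          neg_mem' := by
            rintro a ⟨n, hn, z, hz⟩
            exact ⟨n, hn, -z, by rw [map_neg, hz, smul_neg]⟩ } with hTdef
      have hmemT : ∀ h : HGroup R,
          (∃ n : ℕ, 0 < n ∧ ∃ z : HGroup S, ψH z = n • h) → h ∈ T := fun h hh => hh
      have hmemT' : ∀ h : HGroup R, h ∈ T →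
          (∃ n : ℕ, 0 < n ∧ ∃ z : HGroup S, ψH z = n • h) := fun h hh => hh
      have hdiv : ∀ (h : HGroup R) (m : ℕ), 0 < m → (m • h) ∈ T → h ∈ T := by
        intro h m hm hmem
        obtain ⟨n, hn, z, hz⟩ := hmemT' _ hmem
        exact hmemT _ ⟨n * m, Nat.mul_pos hn hm, z, by rw [hz, smul_smul]⟩
      have hrange : ∀ z : HGroup S, ψH z ∈ T :=
        fun z => hmemT _ ⟨1, one_pos, z, by rw [one_smul]⟩
      -- key: prime cyclic classes are in T
      have key : ∀ p : Ideal R, p.IsPrime → hcls R (FGModQuot R p) ∈ T := by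
        have wf : WellFounded ((· > ·) : Ideal R → Ideal R → Prop) := IsWellFounded.wf
        intro p
        refine wf.induction (C := fun p => p.IsPrime → hcls R (FGModQuot R p) ∈ T) p ?_
        intro p IH hp
        by_cases hht : Order.height (⟨p, hp⟩ : PrimeSpectrum R) ≤ 1
        · -- lying over, and push the class of S/q down
          haveI := hp
          have hbot : Ideal.comap (algebraMap R S) (⊥ : Ideal S) ≤ p := by
            intro x hx
            rw [Ideal.mem_comap, halg, Ideal.mem_bot] at hx
            have hx0 : x = 0 := hinj (by rw [hx, map_zero])
            rw [hx0]
            exact p.zero_mem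
          obtain ⟨q, -, hq, hq_over⟩ :=
            Ideal.exists_ideal_over_prime_of_isIntegral p (⊥ : Ideal S) hbot
          rw [halg] at hq_over
          haveI := hq
          set RM : FGMod R := resMod f hfin (FGModQuot S q) with hRMdef
          have hmem : hcls R RM ∈ T := by
            rw [← hψ_hcls]
            exact hrange _
          -- the R-linear embedding R/p → S/q
          set fbar0 : R →ₗ[R] RM.carrier :=
            { toFun := fun r => Submodule.Quotient.mk (f r)
              map_add' := fun r r' => by
                show Submodule.Quotient.mk (f (r + r'))
                  = Submodule.Quotient.mk (f r) + Submodule.Quotient.mk (f r')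
                rw [map_add, Submodule.Quotient.mk_add]
              map_smul' := fun r r' => by
                change Submodule.Quotient.mk (f (r * r')) = (f r • Submodule.Quotient.mk (f r') : S ⧸ q)
                rw [map_mul, ← Submodule.Quotient.mk_smul, smul_eq_mul] } with hfbar0def
          have hker_fbar : LinearMap.ker fbar0 = p := by
            ext r
            rw [LinearMap.mem_ker]
            show Submodule.Quotient.mk (f r) = 0 ↔ r ∈ p
            rw [Submodule.Quotient.mk_eq_zero, ← hq_over, Ideal.mem_comap]
          set fbar : (FGModQuot R p).carrier →ₗ[R] RM.carrier :=
            Submodule.liftQ p fbar0 (le_of_eq hker_fbar.symm) with hfbardef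
          have hfbar_inj : Function.Injective fbar := by
            rw [← LinearMap.ker_eq_bot]
            exact Submodule.ker_liftQ_eq_bot _ _ _ (le_of_eq hker_fbar)
          set CK : Type u := RM.carrier ⧸ LinearMap.range fbar with hCKdef
          have relR := hcls_add_of_ses R (FGModQuot R p) RM (FGModOf R CK) fbar
            (LinearMap.range fbar).mkQ hfbar_inj
            (Submodule.mkQ_surjective _) (by rw [Submodule.ker_mkQ])
          have hkillRM : ∀ r ∈ p, ∀ m' : RM.carrier, r • m' = 0 := by
            intro r hr m'
            obtain ⟨s, rfl⟩ := Submodule.Quotient.mk_surjective q m'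
            show f r • Submodule.Quotient.mk s = (0 : S ⧸ q)
            rw [← Submodule.Quotient.mk_smul, smul_eq_mul, Submodule.Quotient.mk_eq_zero]
            exact q.mul_mem_right s (by rw [← Ideal.mem_comap, hq_over]; exact hr)
          have hkill : ∀ r ∈ p, ∀ m : CK, r • m = 0 := by
            intro r hr m
            obtain ⟨m', rfl⟩ := Submodule.Quotient.mk_surjective (LinearMap.range fbar) m
            rw [← Submodule.Quotient.mk_smul, hkillRM r hr m']
            exact Submodule.Quotient.mk_zero _
          obtain ⟨k, hk⟩ := devissage R T p (FGModOf R CK) (fun q' hq' hcond hne =>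
            IH q' (lt_of_le_of_ne (fun r hr => hcond r (hkill r hr)) (Ne.symm hne)) hq')
          have heq : (k + 1) • hcls R (FGModQuot R p)
              = hcls R RM - (hcls R (FGModOf R CK) - k • hcls R (FGModQuot R p)) := by
            rw [relR, succ_nsmul]
            abel
          exact hdiv _ (k + 1) (Nat.succ_pos k) (by rw [heq]; exact sub_mem hmem hk)
        · -- pseudo-zero case: height at least two
          have hpz : IsPseudoZero R (FGModQuot R p).carrier := by
            intro p' hp' hh'
            rw [LocalizedModule.subsingleton_iff]
            have hnle : ¬ p ≤ p' := fun hle => hht (le_trans (Order.height_mono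
              (hle : (⟨p, hp⟩ : PrimeSpectrum R) ≤ ⟨p', hp'⟩)) hh')
            obtain ⟨s, hsp, hsp'⟩ := SetLike.not_le_iff_exists.mp hnle
            intro m
            obtain ⟨y, rfl⟩ := Submodule.Quotient.mk_surjective p m
            refine ⟨s, hsp', ?_⟩
            rw [← Submodule.Quotient.mk_smul, smul_eq_mul, Submodule.Quotient.mk_eq_zero]
            exact p.mul_mem_right y hsp
          rw [hcls_zero_of_pz R _ hpz]
          exact zero_mem T
      -- every class of H(R) is in T
      have allN : ∀ N : FGMod R, hcls R N ∈ T := by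
        intro N
        obtain ⟨k, hk⟩ := devissage R T ⊤ N (fun q' hq' _ _ => key q' hq')
        rwa [hcls_zero_of_subsingleton R (FGModQuot R ⊤)
          (Submodule.Quotient.subsingleton_iff.mpr rfl), smul_zero, sub_zero] at hk
      have allH : ∀ h : HGroup R, h ∈ T := by
        intro h
        obtain ⟨g0, rfl⟩ := QuotientAddGroup.mk'_surjective (pseudoZeroSubgroup R) h
        obtain ⟨a, rfl⟩ := QuotientAddGroup.mk'_surjective (grothendieckRelations R) g0
        induction a using FreeAbelianGroup.induction_on with
        | zero => erw [map_zero]; exact zero_mem T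
        | of M => exact allN M
        | neg M hM => erw [map_neg, map_neg]; exact neg_mem hM
        | add x y hx hy => erw [map_add, map_add]; exact add_mem hx hy
      -- conclude surjectivity
      intro y
      induction y using TensorProduct.induction_on with
      | zero => exact ⟨0, map_zero _⟩
      | tmul a h =>
        obtain ⟨n, hn, z, hz⟩ := hmemT' h (allH h)
        refine ⟨(a * (n : ℚ)⁻¹) ⊗ₜ[ℤ] z, ?_⟩
        have hn0 : (n : ℚ) ≠ 0 := Nat.cast_ne_zero.mpr hn.ne'
        rw [LinearMap.lTensor_tmul, AddMonoidHom.coe_toIntLinearMap, hz,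
          TensorProduct.tmul_smul, TensorProduct.smul_tmul', nsmul_eq_mul]
        congr 1
        rw [mul_comm a, ← mul_assoc, mul_inv_cancel₀ hn0, one_mul]
      | add u v hu hv =>
        obtain ⟨u', hu'⟩ := hu
        obtain ⟨v', hv'⟩ := hv
        exact ⟨u' + v', by rw [map_add, hu', hv']⟩
end

section
/- Let C be a convex cone in a Euclidean space of the form W = ℝe ⊕ K (with e a unit vector orthogonal to the subspace K) such that C ∩ K = {0} and C ⊆ (ℝ_{>0}e + K) ∪ {0}. Fix a real number r > 0 and let C^0 = {x ∈ C : the e-coordinate of x equals r}. Then the closure of C meets K only at the origin if and only if C^0 is a bounded subset of W. -/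
universe u

open scoped RealInnerProductSpace in
/-- For a convex cone `C` in `W = ℝe ⊕ K` with `C ∩ K = {0}` and
`C ⊆ (ℝ_{>0}e + K) ∪ {0}`, the closure of `C` meets `K` only at the origin iff the slice
of `C` at `e`-coordinate `r` is bounded. -/
theorem closure_meets_kernel_iff_slice_bounded
    (W : Type u) [NormedAddCommGroup W] [InnerProductSpace ℝ W] [FiniteDimensional ℝ W]
    (e : W) (he : ‖e‖ = 1) (K : Submodule ℝ W) (hK : K = (ℝ ∙ e)ᗮ)
    (C : Set W)
    (hcone : ∀ x ∈ C, ∀ y ∈ C, ∀ a b : ℝ, 0 < a → 0 < b → a • x + b • y ∈ C)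
    (hCK : C ∩ (K : Set W) = {0})
    (hpos : ∀ x ∈ C, x ≠ 0 → 0 < ⟪x, e⟫)
    (r : ℝ) (hr : 0 < r) :
    closure C ∩ (K : Set W) = {0} ↔
      Bornology.IsBounded { x ∈ C | ⟪x, e⟫ = r } := by
  have hcont : Continuous fun x : W => ⟪x, e⟫ :=
    Continuous.inner continuous_id continuous_const
  have hK' : ∀ x : W, x ∈ K ↔ ⟪x, e⟫ = 0 := by
    intro x
    rw [hK, Submodule.mem_orthogonal_singleton_iff_inner_right, real_inner_comm]
  have h0C : (0 : W) ∈ C := by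
    have : (0 : W) ∈ C ∩ (K : Set W) := by rw [hCK]; rfl
    exact this.1
  have hscale : ∀ x ∈ C, ∀ t : ℝ, 0 < t → t • x ∈ C := by
    intro x hx t ht
    have h := hcone x hx x hx (t/2) (t/2) (by linarith) (by linarith)
    have : (t/2) • x + (t/2) • x = t • x := by
      rw [← add_smul]; ring_nf
    rwa [this] at h
  have hnonneg : ∀ x ∈ closure C, 0 ≤ ⟪x, e⟫ := by
    have hclosed : IsClosed {x : W | 0 ≤ ⟪x, e⟫} :=
      isClosed_le continuous_const hcont
    have hsub : C ⊆ {x : W | 0 ≤ ⟪x, e⟫} := by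
      intro x hx
      by_cases hx0 : x = 0
      · simp [hx0]
      · exact le_of_lt (hpos x hx hx0)
    exact fun x hx => closure_minimal hsub hclosed hx
  constructor
  · intro hcl
    rcases Set.eq_empty_or_nonempty { x ∈ C | ⟪x, e⟫ = r } with h | ⟨x0, hx0C, hx0r⟩
    · rw [h]; exact Bornology.isBounded_empty
    · set T := closure C ∩ Metric.sphere (0 : W) 1 with hT
      have hTclosed : IsClosed T := isClosed_closure.inter Metric.isClosed_sphere
      have hTbdd : Bornology.IsBounded T :=
        (Metric.isBounded_sphere).subset Set.inter_subset_right
      have hTcomp : IsCompact T := Metric.isCompact_of_isClosed_isBounded hTclosed hTbdd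
      have hx0ne : x0 ≠ 0 := by
        intro h0; rw [h0] at hx0r; simp at hx0r; linarith
      have hx0norm : (0 : ℝ) < ‖x0‖ := norm_pos_iff.mpr hx0ne
      have hmemT : ∀ x ∈ C, x ≠ 0 → ‖x‖⁻¹ • x ∈ T := by
        intro x hx hxne
        have hn : (0 : ℝ) < ‖x‖ := norm_pos_iff.mpr hxne
        refine ⟨subset_closure (hscale x hx _ (inv_pos.mpr hn)), ?_⟩
        simp [norm_smul, abs_of_pos (inv_pos.mpr hn), inv_mul_cancel₀ (ne_of_gt hn)]
      have hTne : T.Nonempty := ⟨_, hmemT x0 hx0C hx0ne⟩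
      obtain ⟨u0, hu0T, hmin⟩ :=
        hTcomp.exists_isMinOn hTne hcont.continuousOn
      have hu0ne : u0 ≠ 0 := by
        intro h0
        have := hu0T.2
        rw [h0] at this
        simp at this
      have hm : 0 < ⟪u0, e⟫ := by
        rcases lt_or_eq_of_le (hnonneg u0 hu0T.1) with h | h
        · exact h
        · exfalso
          have : u0 ∈ closure C ∩ (K : Set W) := ⟨hu0T.1, (hK' u0).mpr h.symm⟩
          rw [hcl] at this
          exact hu0ne this
      rw [isBounded_iff_forall_norm_le]
      refine ⟨r / ⟪u0, e⟫, ?_⟩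
      rintro x ⟨hxC, hxr⟩
      have hxne : x ≠ 0 := by
        intro h0; rw [h0] at hxr; simp at hxr; linarith
      have hn : (0 : ℝ) < ‖x‖ := norm_pos_iff.mpr hxne
      have hle : ⟪u0, e⟫ ≤ ‖x‖⁻¹ * r := by
        have h := hmin (hmemT x hxC hxne)
        simpa [real_inner_smul_left, hxr] using h
      rw [le_div_iff₀ hm]
      calc ‖x‖ * ⟪u0, e⟫ ≤ ‖x‖ * (‖x‖⁻¹ * r) := by
            exact mul_le_mul_of_nonneg_left hle (le_of_lt hn)
        _ = r := by field_simp
  · intro hb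
    obtain ⟨M, hM⟩ := isBounded_iff_forall_norm_le.mp hb
    apply Set.eq_of_subset_of_subset
    · rintro y ⟨hycl, hyK⟩
      have hclosed : IsClosed {x : W | r * ‖x‖ ≤ M * ⟪x, e⟫} :=
        isClosed_le (continuous_const.mul continuous_norm) (continuous_const.mul hcont)
      have hsub : C ⊆ {x : W | r * ‖x‖ ≤ M * ⟪x, e⟫} := by
        intro x hx
        by_cases hx0 : x = 0
        · simp [hx0]
        · have hpx := hpos x hx hx0
          set z := (r / ⟪x, e⟫) • x with hz
          have hzC : z ∈ C := hscale x hx _ (div_pos hr hpx)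
          have hze : ⟪z, e⟫ = r := by
            rw [hz, real_inner_smul_left]
            field_simp
          have hMz := hM z ⟨hzC, hze⟩
          have hznorm : ‖z‖ = (r / ⟪x, e⟫) * ‖x‖ := by
            rw [hz, norm_smul, Real.norm_eq_abs, abs_of_pos (div_pos hr hpx)]
          rw [hznorm, div_mul_eq_mul_div, div_le_iff₀ hpx] at hMz
          exact hMz
      have hy1 : r * ‖y‖ ≤ M * ⟪y, e⟫ := closure_minimal hsub hclosed hycl
      have hy2 : ⟪y, e⟫ = 0 := (hK' y).mp hyK
      rw [hy2, mul_zero] at hy1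
      have hy0 : ‖y‖ = 0 := by nlinarith [norm_nonneg y]
      simpa using norm_eq_zero.mp hy0
    · rintro y hy
      rw [Set.mem_singleton_iff] at hy
      subst hy
      exact ⟨subset_closure h0C, K.zero_mem⟩
end

section
/- Let R be a commutative ring and I a reflexive ideal of R with positive grade (I contains a nonzerodivisor, and the natural map I → I** is an isomorphism). Suppose I* = Hom_R(I,R) is generated by two elements f and g. Then the sequence 0 → I → R^{⊕2} → I* → 0 is exact, where the first map sends x to (−g(x), f(x)) and the second sends (a,b) to af + bg. -/
universe u

/-- For a linear functional `h` on an ideal `I`, `y * h x = x * h y`. -/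
lemma dual_ideal_comm {R : Type u} [CommRing R] {I : Ideal R}
    (h : Module.Dual R I) (x y : I) : (y : R) * h x = (x : R) * h y := by
  have e : ((y : R) • x : I) = (x : R) • y := Subtype.ext (by simp [mul_comm])
  calc (y : R) * h x = h ((y : R) • x) := (map_smul h _ _).symm
    _ = h ((x : R) • y) := by rw [e]
    _ = (x : R) * h y := map_smul h _ _

/-- For a reflexive ideal `I` of positive grade whose dual is generated
by `f` and `g`, the sequence `0 → I → R² → I*` with maps `x ↦ (−g x, f x)` and
`(a,b) ↦ a f + b g` is exact. -/
theorem reflexive_ideal_two_generated_dual_exact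
    (R : Type u) [CommRing R] (I : Ideal R)
    (hgrade : ∃ r ∈ I, r ∈ nonZeroDivisors R)
    (hrefl : Function.Bijective (Module.Dual.eval R I))
    (f g : Module.Dual R I)
    (hgen : Submodule.span R {f, g} = ⊤) :
    Function.Injective (LinearMap.prod (-g) f) ∧
    Function.Surjective
      ((LinearMap.fst R R R).smulRight f + (LinearMap.snd R R R).smulRight g) ∧
    LinearMap.range (LinearMap.prod (-g) f) =
      LinearMap.ker
        ((LinearMap.fst R R R).smulRight f + (LinearMap.snd R R R).smulRight g) := by
  obtain ⟨r, hrI, hr⟩ := hgrade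
  set Φ : (R × R) →ₗ[R] Module.Dual R I :=
    (LinearMap.fst R R R).smulRight f + (LinearMap.snd R R R).smulRight g with hΦ
  have hΦapply : ∀ c d : R, Φ (c, d) = c • f + d • g := by
    intro c d; simp [hΦ]
  -- surjectivity of Φ
  have hsurj : Function.Surjective Φ := by
    intro h
    have : h ∈ Submodule.span R {f, g} := hgen ▸ Submodule.mem_top
    obtain ⟨c, d, hcd⟩ := Submodule.mem_span_pair.mp this
    exact ⟨(c, d), by rw [hΦapply]; exact hcd⟩
  -- the inclusion map is in the span
  obtain ⟨c₀, d₀, hι⟩ := Submodule.mem_span_pair.mp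
    (hgen ▸ Submodule.mem_top : I.subtype ∈ Submodule.span R {f, g})
  have hιy : ∀ y : I, (y : R) = c₀ * f y + d₀ * g y := by
    intro y
    have := congrFun (congrArg (fun h : Module.Dual R I => (h : I → R)) hι) y
    simpa using this.symm
  have hzero : ∀ t : R, (∀ y : I, (y : R) * t = 0) → t = 0 := by
    intro t ht
    exact hr.2 t (by rw [mul_comm]; exact ht ⟨r, hrI⟩)
  -- key symmetry: h x * h' y = h y * h' x
  have key2 : ∀ (h h' : Module.Dual R I) (x y : I), h x * h' y = h y * h' x := by
    intro h h' x y
    have := hzero (h x * h' y - h y * h' x) ?_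
    · linear_combination this
    intro z
    have a1 := dual_ideal_comm h x z
    have a2 := dual_ideal_comm h y z
    have b := dual_ideal_comm h' y x
    linear_combination h' y * a1 + h z * b - h' x * a2
  -- injectivity
  have hinj : Function.Injective (LinearMap.prod (-g) f) := by
    intro x y hxy
    have h1 := congrArg Prod.fst hxy
    have h2 := congrArg Prod.snd hxy
    simp only [LinearMap.prod_apply, Pi.prod, LinearMap.neg_apply] at h1 h2
    have hfg : f x = f y ∧ g x = g y := ⟨h2, neg_injective h1⟩
    apply hrefl.injective
    ext h
    have : h ∈ Submodule.span R {f, g} := hgen ▸ Submodule.mem_top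
    simp only [Module.Dual.eval_apply]
    induction this using Submodule.span_induction with
    | mem h hm =>
      rcases hm with rfl | rfl
      · exact hfg.1
      · exact hfg.2
    | zero => simp
    | add h₁ h₂ _ _ ih1 ih2 => simp [ih1, ih2]
    | smul c h _ ih => simp [ih]
  refine ⟨hinj, hsurj, ?_⟩
  -- exactness in the middle
  apply le_antisymm
  · -- range ⊆ ker
    rintro _ ⟨x, rfl⟩
    simp only [LinearMap.mem_ker, LinearMap.prod_apply, Function.prod]
    rw [hΦ]
    ext y
    simp only [LinearMap.add_apply, LinearMap.smulRight_apply, LinearMap.fst_apply,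
      LinearMap.snd_apply, LinearMap.neg_apply, LinearMap.zero_apply, smul_eq_mul,
      LinearMap.smul_apply]
    linear_combination key2 f g x y
  · -- ker ⊆ range
    rintro ⟨a, b⟩ hab
    rw [LinearMap.mem_ker, hΦapply] at hab
    have haby : ∀ y : I, a * f y + b * g y = 0 := by
      intro y
      have := congrFun (congrArg (fun h : Module.Dual R I => (h : I → R)) hab) y
      simpa using this
    -- build ψ in the double dual with ψ f = b, ψ g = -a
    set β : (R × R) →ₗ[R] R := b • LinearMap.fst R R R - a • LinearMap.snd R R R with hβ
    have hβapply : ∀ c d : R, β (c, d) = b * c - a * d := by intro c d; simp [hβ]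
    have hle : LinearMap.ker Φ ≤ LinearMap.ker β := by
      rintro ⟨c, d⟩ hcd
      rw [LinearMap.mem_ker, hΦapply] at hcd
      have hcdy : ∀ y : I, c * f y + d * g y = 0 := by
        intro y
        have := congrFun (congrArg (fun h : Module.Dual R I => (h : I → R)) hcd) y
        simpa using this
      rw [LinearMap.mem_ker, hβapply]
      apply hr.2
      rw [mul_comm]
      have hf : ∀ y : I, f y * (b * c - a * d) = 0 := by
        intro y; linear_combination b * hcdy y - d * haby y
      have hg : ∀ y : I, (g y : R) * (b * c - a * d) = 0 := by
        intro y; linear_combination c * haby y - a * hcdy y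
      have := hιy ⟨r, hrI⟩
      calc r * (b * c - a * d)
          = (c₀ * f ⟨r, hrI⟩ + d₀ * g ⟨r, hrI⟩) * (b * c - a * d) := by rw [← this]
        _ = 0 := by linear_combination c₀ * hf ⟨r, hrI⟩ + d₀ * hg ⟨r, hrI⟩
    let e := Φ.quotKerEquivOfSurjective hsurj
    let ψ : Module.Dual R (Module.Dual R I) :=
      ((LinearMap.ker Φ).liftQ β hle) ∘ₗ e.symm.toLinearMap
    have hψΦ : ∀ v : R × R, ψ (Φ v) = β v := by
      intro v
      have hmk : e (Submodule.Quotient.mk v) = Φ v := rfl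
      have : e.symm (Φ v) = Submodule.Quotient.mk v := by
        apply e.injective; rw [e.apply_symm_apply, hmk]
      simp only [ψ, LinearMap.coe_comp, Function.comp_apply, LinearEquiv.coe_coe, this]
      exact Submodule.liftQ_apply _ _ _
    obtain ⟨x, hx⟩ := hrefl.surjective ψ
    refine ⟨x, ?_⟩
    have hfx : f x = b := by
      have h1 : ψ f = b := by
        have := hψΦ (1, 0)
        rw [hΦapply, hβapply] at this
        simpa using this
      have h2 : Module.Dual.eval R I x f = f x := rfl
      rw [← h1, ← hx]; exact h2
    have hgx : g x = -a := by
      have h1 : ψ g = -a := by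
        have := hψΦ (0, 1)
        rw [hΦapply, hβapply] at this
        simpa using this
      have h2 : Module.Dual.eval R I x g = g x := rfl
      rw [← h1, ← hx]; exact h2
    simp [LinearMap.prod_apply, hfx, hgx]
end
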